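/- arXiv:2205.13729 — 2 statements merged into one kernel-verified Lean document; each statement's English description precedes it below -/
import Mathlib

section
/- Let X be a topological space and n ≥ 1. Let λ_1,…,λ_n : X → ℂ and λ̃_1,…,λ̃_n : X → ℂ be continuous functions such that for every x ∈ X the values λ_1(x),…,λ_n(x) are pairwise distinct and the values λ̃_1(x),…,λ̃_n(x) are pairwise distinct. Let S be the set of continuous maps A : X → M(n,ℂ) such that A(x) is normal and det(t·I − A(x)) = ∏_{i=1}^n (t − λ_i(x)) for all x, and let S̃ be the analogous set with λ̃_i in place of λ_i. Then there is a bijection between the quotient of S by unitary equivalence and the quotient of S̃ by unitary equivalence. -/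
/-!
Let `p_x` be the Lagrange polynomial with `p_x (l i x) = l' i x`. Applying `p_x` pointwise maps
`NormalWithEigenvalues n l` into `NormalWithEigenvalues n l'`: a polynomial in a normal matrix is
normal, `p (A)` has eigenvalues `p (λ_i)` counted with multiplicity, and `p_x (A x)` depends
continuously on `x` because the nodes `l i x` never collide. Polynomial calculus commutes with
unitary conjugation, and interpolating back from `l'` to `l` inverts the map: `q_x ∘ p_x - X`
vanishes at the simple eigenvalues of `A x`, so it is a multiple of the characteristic polynomial
and annihilates `A x` by Cayley–Hamilton.
-/

open Matrix

/-- Unitary equivalence of matrices over a topological space `X`. -/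
def UnitarilyEquiv {X : Type*} [TopologicalSpace X] {n : ℕ}
    (A B : X → Matrix (Fin n) (Fin n) ℂ) : Prop :=
  ∃ U : X → Matrix (Fin n) (Fin n) ℂ, Continuous U ∧ (∀ x, (U x)ᴴ * U x = 1) ∧
    ∀ x, B x = (U x)ᴴ * A x * U x

/-- The set of continuous normal matrices over `X` with characteristic polynomial
`∏ i, (t - l i x)`. -/
def NormalWithEigenvalues {X : Type*} [TopologicalSpace X] (n : ℕ)
    (l : Fin n → X → ℂ) : Set (X → Matrix (Fin n) (Fin n) ℂ) :=
  {A | Continuous A ∧ (∀ x, A x * (A x)ᴴ = (A x)ᴴ * A x) ∧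
    ∀ x, ∀ t : ℂ, (t • (1 : Matrix (Fin n) (Fin n) ℂ) - A x).det = ∏ i, (t - l i x)}

open Polynomial Finset

theorem Commute.aeval_right {R A : Type*} [CommSemiring R] [Semiring A] [Algebra R A] {a b : A}
    (h : Commute b a) (p : R[X]) : Commute b (aeval a p) := by
  rw [aeval_eq_sum_range]
  exact Commute.sum_right _ _ _ fun i _ => (h.pow_right i).smul_right _

instance Polynomial.isStarNormal_aeval {R A : Type*} [CommSemiring R] [Semiring A] [StarRing A]
    [Algebra R A] (a : A) [IsStarNormal a] (p : R[X]) : IsStarNormal (aeval a p) where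
  star_comm_self := by
    have h : Commute a (star (aeval a p)) := by
      simpa using ((star_comm_self (x := a)).aeval_right p).star_star
    exact h.symm.aeval_right p

theorem Polynomial.monoidHom_ext_of_isAlgClosed {K M : Type*} [Field K] [IsAlgClosed K]
    [CommMonoid M] {f g : K[X] →* M} (hC : ∀ c, f (C c) = g (C c))
    (hX : ∀ r, f (X - C r) = g (X - C r)) : f = g := by
  ext q
  rw [(IsAlgClosed.splits q).eq_prod_roots, map_mul, map_mul, map_multiset_prod,
    map_multiset_prod, Multiset.map_map, Multiset.map_map, hC]
  congr 2
  exact Multiset.map_congr rfl fun r _ => hX r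

namespace Matrix

variable {ι K : Type*} [Fintype ι] [DecidableEq ι] [Field K] {A : Matrix ι ι K} {l : ι → K}

theorem det_aeval_eq_prod_eval [IsAlgClosed K]
    (hA : ∀ t : K, (t • 1 - A).det = ∏ i, (t - l i)) (q : K[X]) :
    (aeval A q).det = ∏ i, q.eval (l i) := by
  let f : K[X] →* K := detMonoidHom.comp (aeval A).toMonoidHom
  let g : K[X] →* K := ∏ i, (evalRingHom (l i)).toMonoidHom
  -- both sides are multiplicative in `q`: compare them on constants and on the `X - C r`
  suffices f = g by simpa [f, g, MonoidHom.finsetProd_apply] using DFunLike.congr_fun this q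
  refine monoidHom_ext_of_isAlgClosed (fun c => ?_) fun r => ?_
  · simp [f, g, MonoidHom.finsetProd_apply, Algebra.algebraMap_eq_smul_one]
  · calc (aeval A (X - C r)).det = (-(r • 1 - A)).det := by
          simp [Algebra.algebraMap_eq_smul_one]
      _ = ∏ i, -(r - l i) := by rw [det_neg, hA, prod_neg, card_univ]
      _ = g (X - C r) := by simp [g, MonoidHom.finsetProd_apply]

theorem det_smul_one_sub_aeval [IsAlgClosed K]
    (hA : ∀ t : K, (t • 1 - A).det = ∏ i, (t - l i)) (p : K[X]) (t : K) :
    (t • 1 - aeval A p).det = ∏ i, (t - p.eval (l i)) := by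
  simpa [Algebra.algebraMap_eq_smul_one] using det_aeval_eq_prod_eval hA (C t - p)

theorem charpoly_eq_prod_X_sub_C [Infinite K]
    (hA : ∀ t : K, (t • 1 - A).det = ∏ i, (t - l i)) : A.charpoly = ∏ i, (X - C (l i)) :=
  Polynomial.funext fun t => by
    simp [eval_charpoly, eval_prod, ← hA, smul_one_eq_diagonal]

theorem aeval_eq_zero_of_eval_eq_zero [Infinite K]
    (hA : ∀ t : K, (t • 1 - A).det = ∏ i, (t - l i)) (hl : Function.Injective l) {q : K[X]}
    (hq : ∀ i, q.eval (l i) = 0) : aeval A q = 0 := by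
  have hdvd : A.charpoly ∣ q := charpoly_eq_prod_X_sub_C hA ▸
    prod_dvd_of_coprime ((pairwise_coprime_X_sub_C hl).set_pairwise _)
      fun i _ => dvd_iff_isRoot.mpr (hq i)
  obtain ⟨r, rfl⟩ := hdvd
  rw [map_mul, aeval_self_charpoly, zero_mul]

theorem aeval_conjTranspose_mul_mul {R : Type*} [CommRing R] [StarRing R] {U : Matrix ι ι R}
    (hU : Uᴴ * U = 1) (A : Matrix ι ι R) (p : R[X]) :
    aeval (Uᴴ * A * U) p = Uᴴ * aeval A p * U := by
  let u : unitary (Matrix ι ι R) := ⟨U, mem_unitaryGroup_iff'.mpr hU⟩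
  simpa [u, star_eq_conjTranspose] using
    aeval_algHom_apply (Unitary.conjStarAlgAut R _ (star u)) A p

end Matrix

theorem Lagrange.interpolate_eq_sum_C_mul_nodal_erase {F ι : Type*} [Field F] [DecidableEq ι]
    (s : Finset ι) (v r : ι → F) :
    Lagrange.interpolate s v r = ∑ i ∈ s, C (r i * Lagrange.nodalWeight s v i) *
      Lagrange.nodal (s.erase i) v := by
  rw [Lagrange.interpolate_apply]
  refine sum_congr rfl fun i hi => ?_
  rw [Lagrange.basis_eq_prod_sub_inv_mul_nodal_div hi, ← Lagrange.nodal_erase_eq_nodal_div hi,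
    ← mul_assoc, ← C_mul, mul_comm (r i)]

section Continuity

variable {T m ι : Type*} [TopologicalSpace T] [Fintype m] [DecidableEq m]

theorem continuous_aeval_nodal {R : Type*} [CommRing R] [TopologicalSpace R] [IsTopologicalRing R]
    {A : T → Matrix m m R} (hA : Continuous A) {v : ι → T → R} (hv : ∀ i, Continuous (v i))
    (s : Finset ι) : Continuous fun x => aeval (A x) (Lagrange.nodal s fun i => v i x) := by
  classical
  induction s using Finset.induction with
  | empty => simpa [Lagrange.nodal_empty] using continuous_const
  | insert i s hi ih =>
    simp only [Lagrange.nodal_insert_eq_nodal hi, map_mul, map_sub, aeval_X, aeval_C,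
      Algebra.algebraMap_eq_smul_one]
    exact (hA.sub ((hv i).smul continuous_const)).matrix_mul ih

theorem continuous_aeval_interpolate {K : Type*} [Field K] [TopologicalSpace K]
    [IsTopologicalRing K] [ContinuousInv₀ K] [DecidableEq ι]
    {A : T → Matrix m m K} (hA : Continuous A) {v r : ι → T → K} (hv : ∀ i, Continuous (v i))
    (hr : ∀ i, Continuous (r i)) (hinj : ∀ x, Function.Injective fun i => v i x) (s : Finset ι) :
    Continuous fun x => aeval (A x) (Lagrange.interpolate s (fun i => v i x) fun i => r i x) := by
  simp only [Lagrange.interpolate_eq_sum_C_mul_nodal_erase, map_sum, map_mul, aeval_C,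
    Algebra.algebraMap_eq_smul_one, smul_mul_assoc, one_mul]
  refine continuous_finsetSum _ fun i _ => ?_
  have hw : Continuous fun x => Lagrange.nodalWeight s (fun j => v j x) i :=
    continuous_finsetProd _ fun j hj => ((hv i).sub (hv j)).inv₀ fun x =>
      sub_ne_zero.mpr ((hinj x).ne (ne_of_mem_erase hj).symm)
  exact (hr i).smul (hw.smul (continuous_aeval_nodal hA hv _))

end Continuity

section ReplaceEigenvalues

variable {T : Type*} [TopologicalSpace T] {n : ℕ}

noncomputable def replaceEigenvalues (l l' : Fin n → T → ℂ) (A : T → Matrix (Fin n) (Fin n) ℂ)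
    (x : T) : Matrix (Fin n) (Fin n) ℂ :=
  aeval (A x) (Lagrange.interpolate univ (fun i => l i x) fun i => l' i x)

variable {l l' : Fin n → T → ℂ}

theorem replaceEigenvalues_mem (hl : ∀ i, Continuous (l i)) (hl' : ∀ i, Continuous (l' i))
    (hinj : ∀ x, Function.Injective fun i => l i x) {A : T → Matrix (Fin n) (Fin n) ℂ}
    (hA : A ∈ NormalWithEigenvalues n l) :
    replaceEigenvalues l l' A ∈ NormalWithEigenvalues n l' := by
  obtain ⟨hAc, hAn, hAchar⟩ := hA
  refine ⟨continuous_aeval_interpolate hAc hl hl' hinj univ, fun x => ?_, fun x t => ?_⟩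
  · have : IsStarNormal (A x) := ⟨(hAn x).symm⟩
    exact (star_comm_self (x := aeval (A x) _)).eq.symm
  · rw [replaceEigenvalues, Matrix.det_smul_one_sub_aeval (hAchar x)]
    exact prod_congr rfl fun i _ => by
      rw [Lagrange.eval_interpolate_at_node _ (hinj x).injOn (mem_univ i)]

theorem replaceEigenvalues_replaceEigenvalues (hinj : ∀ x, Function.Injective fun i => l i x)
    (hinj' : ∀ x, Function.Injective fun i => l' i x) {A : T → Matrix (Fin n) (Fin n) ℂ}
    (hA : A ∈ NormalWithEigenvalues n l) :
    replaceEigenvalues l' l (replaceEigenvalues l l' A) = A := by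
  funext x
  set p := Lagrange.interpolate univ (fun i => l i x) fun i => l' i x
  set p' := Lagrange.interpolate univ (fun i => l' i x) fun i => l i x
  have hcomp : aeval (A x) (p'.comp p - X) = 0 :=
    Matrix.aeval_eq_zero_of_eval_eq_zero (hA.2.2 x) (hinj x) fun i => by
      rw [eval_sub, eval_comp, eval_X, Lagrange.eval_interpolate_at_node _ (hinj x).injOn
        (mem_univ i), Lagrange.eval_interpolate_at_node _ (hinj' x).injOn (mem_univ i), sub_self]
  rwa [map_sub, aeval_comp, aeval_X, sub_eq_zero] at hcomp

theorem UnitarilyEquiv.replaceEigenvalues {A B : T → Matrix (Fin n) (Fin n) ℂ}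
    (h : UnitarilyEquiv A B) :
    UnitarilyEquiv (replaceEigenvalues l l' A) (replaceEigenvalues l l' B) := by
  obtain ⟨U, hUc, hU, hAB⟩ := h
  exact ⟨U, hUc, hU, fun x => by
    rw [_root_.replaceEigenvalues, hAB x, Matrix.aeval_conjTranspose_mul_mul (hU x)]; rfl⟩

theorem unitarilyEquiv_replaceEigenvalues_iff (hinj : ∀ x, Function.Injective fun i => l i x)
    (hinj' : ∀ x, Function.Injective fun i => l' i x) {A B : T → Matrix (Fin n) (Fin n) ℂ}
    (hA : A ∈ NormalWithEigenvalues n l) (hB : B ∈ NormalWithEigenvalues n l) :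
    UnitarilyEquiv (replaceEigenvalues l l' A) (replaceEigenvalues l l' B) ↔
      UnitarilyEquiv A B := by
  refine ⟨fun h => ?_, UnitarilyEquiv.replaceEigenvalues⟩
  simpa only [replaceEigenvalues_replaceEigenvalues hinj hinj' hA,
    replaceEigenvalues_replaceEigenvalues hinj hinj' hB] using
    h.replaceEigenvalues (l := l') (l' := l)

noncomputable def normalWithEigenvaluesEquiv (hl : ∀ i, Continuous (l i))
    (hl' : ∀ i, Continuous (l' i)) (hinj : ∀ x, Function.Injective fun i => l i x)
    (hinj' : ∀ x, Function.Injective fun i => l' i x) :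
    NormalWithEigenvalues n l ≃ NormalWithEigenvalues n l' where
  toFun A := ⟨replaceEigenvalues l l' A, replaceEigenvalues_mem hl hl' hinj A.2⟩
  invFun A := ⟨replaceEigenvalues l' l A, replaceEigenvalues_mem hl' hl hinj' A.2⟩
  left_inv A := Subtype.ext (replaceEigenvalues_replaceEigenvalues hinj hinj' A.2)
  right_inv A := Subtype.ext (replaceEigenvalues_replaceEigenvalues hinj' hinj A.2)

end ReplaceEigenvalues

theorem stmt_1_general {X : Type*} [TopologicalSpace X] (n : ℕ)
    (l l' : Fin n → X → ℂ)
    (hl : ∀ i, Continuous (l i)) (hl' : ∀ i, Continuous (l' i))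
    (hdist : ∀ x, ∀ i j : Fin n, i ≠ j → l i x ≠ l j x)
    (hdist' : ∀ x, ∀ i j : Fin n, i ≠ j → l' i x ≠ l' j x) :
    Nonempty
      ((Quot fun (A B : NormalWithEigenvalues n l) => UnitarilyEquiv A.1 B.1) ≃
       (Quot fun (A B : NormalWithEigenvalues n l') => UnitarilyEquiv A.1 B.1)) := by
  have hinj : ∀ x, Function.Injective fun i => l i x := fun x i j h =>
    not_imp_not.mp (hdist x i j) h
  have hinj' : ∀ x, Function.Injective fun i => l' i x := fun x i j h =>
    not_imp_not.mp (hdist' x i j) h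
  exact ⟨Quot.congr (normalWithEigenvaluesEquiv hl hl' hinj hinj') fun A B =>
    (unitarilyEquiv_replaceEigenvalues_iff hinj hinj' A.2 B.2).symm⟩

/-- The number of unitary equivalence classes of normal matrices over `X` with a given
multiplicity-free split characteristic polynomial does not depend on the polynomial. -/
theorem stmt_1 {X : Type*} [TopologicalSpace X] (n : ℕ) (hn : 1 ≤ n)
    (l l' : Fin n → X → ℂ)
    (hl : ∀ i, Continuous (l i)) (hl' : ∀ i, Continuous (l' i))
    (hdist : ∀ x, ∀ i j : Fin n, i ≠ j → l i x ≠ l j x)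
    (hdist' : ∀ x, ∀ i j : Fin n, i ≠ j → l' i x ≠ l' j x) :
    Nonempty
      ((Quot fun (A B : NormalWithEigenvalues n l) => UnitarilyEquiv A.1 B.1) ≃
       (Quot fun (A B : NormalWithEigenvalues n l') => UnitarilyEquiv A.1 B.1)) :=
  stmt_1_general n l l' hl hl' hdist hdist'
end

section
/- Let X be a topological space and n ≥ 1. Let E_1,…,E_n : X → M(n,ℂ) be continuous maps such that for every x ∈ X: E_i(x)² = E_i(x), E_i(x)E_j(x) = 0 for i ≠ j, ∑_{i=1}^n E_i(x) = I, and E_i(x) has rank 1 (so the ranges of the E_i(x) give a decomposition of ℂⁿ into n complex lines). Then there exist continuous maps Q_1,…,Q_n : X → M(n,ℂ) such that for every x ∈ X: Q_i(x)² = Q_i(x), Q_i(x)* = Q_i(x), Q_i(x)Q_j(x) = 0 for i ≠ j, ∑_{i=1}^n Q_i(x) = I, each Q_i(x) has rank 1, and for every k with 1 ≤ k ≤ n the range of Q_1(x) + ⋯ + Q_k(x) equals the range of E_1(x) + ⋯ + E_k(x). -/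
/-!
For an idempotent `e` put `d = 1 + (e - e*)(e - e*)*`. Then `e d = d e = e e* e`, and `d` is
invertible (positive definite, for matrices), so `p = e e* d⁻¹` (Kerzman–Stein) is a
self-adjoint idempotent with `p e = e` and `e p = p`: the orthogonal projection onto the range
of `e`, given by a formula that is continuous in `e`. Applied to the partial sums
`F_k = E_1 + ⋯ + E_k`, which satisfy `F_l F_k = F_k` for `k ≤ l`, it yields a nested chain
`0 = P_0 ≤ P_1 ≤ ⋯ ≤ P_n = 1` of orthogonal projections with `range P_k = range F_k`, and
`Q_k = P_k - P_{k-1}` are the required projections. Their ranks are computed through traces,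
since rank equals trace for idempotent matrices.
-/

open Matrix Finset

theorem Commute.ringInverse_right {M₀ : Type*} [MonoidWithZero M₀] {a b : M₀}
    (h : Commute a b) : Commute a (Ring.inverse b) := by
  by_cases hb : IsUnit b
  · obtain ⟨u, rfl⟩ := hb
    rw [Ring.inverse_unit]
    exact h.units_inv_right
  · rw [Ring.inverse_non_unit b hb]
    exact Commute.zero_right a

section RangeProj

variable {R : Type*} [Ring R] [StarRing R] {e f : R}

def rangeProjDenom (e : R) : R := 1 + (e - star e) * star (e - star e)

noncomputable def rangeProj (e : R) : R := e * star e * Ring.inverse (rangeProjDenom e)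

@[simp] lemma rangeProj_zero : rangeProj (0 : R) = 0 := by simp [rangeProj]

@[simp] lemma rangeProj_one : rangeProj (1 : R) = 1 := by simp [rangeProj, rangeProjDenom]

lemma isSelfAdjoint_rangeProjDenom (e : R) : IsSelfAdjoint (rangeProjDenom e) := by
  simp [rangeProjDenom, IsSelfAdjoint, star_mul]

lemma mul_rangeProjDenom (he : IsIdempotentElem e) :
    e * rangeProjDenom e = e * star e * e := by
  have hs : IsIdempotentElem (star e) := he.star
  simp only [rangeProjDenom, star_sub, star_star, mul_add, mul_sub, sub_mul, mul_one,
    ← mul_assoc, he.eq]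
  rw [mul_assoc e (star e) (star e), hs.eq]
  abel

lemma rangeProjDenom_mul (he : IsIdempotentElem e) :
    rangeProjDenom e * e = e * star e * e := by
  have hs : IsIdempotentElem (star e) := he.star
  simp only [rangeProjDenom, star_sub, star_star, add_mul, mul_sub, sub_mul, one_mul,
    mul_assoc, he.eq]
  rw [← mul_assoc (star e) (star e), hs.eq]
  abel

lemma commute_rangeProjDenom (he : IsIdempotentElem e) : Commute e (rangeProjDenom e) :=
  (mul_rangeProjDenom he).trans (rangeProjDenom_mul he).symm

lemma isSelfAdjoint_rangeProj (he : IsIdempotentElem e) : IsSelfAdjoint (rangeProj e) := by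
  have hcomm := commute_rangeProjDenom he
  have hcomm' : Commute (star e) (rangeProjDenom e) := by
    simpa [(isSelfAdjoint_rangeProjDenom e).star_eq] using hcomm.star_star
  exact (IsSelfAdjoint.commute_iff (.mul_star_self e)
    (isSelfAdjoint_rangeProjDenom e).ringInverse).mp
      (hcomm.ringInverse_right.mul_left hcomm'.ringInverse_right)

lemma mul_rangeProj (he : IsIdempotentElem e) : e * rangeProj e = rangeProj e := by
  simp only [rangeProj, ← mul_assoc, he.eq]

section

variable (hd : IsUnit (rangeProjDenom e))
include hd

lemma rangeProj_mul_self (he : IsIdempotentElem e) : rangeProj e * e = e := calc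
  rangeProj e * e = e * star e * e * Ring.inverse (rangeProjDenom e) := by
    rw [rangeProj, mul_assoc _ _ e, ← (commute_rangeProjDenom he).ringInverse_right.eq,
      ← mul_assoc]
  _ = e := by
    rw [← mul_rangeProjDenom he, mul_assoc, Ring.mul_inverse_cancel _ hd, mul_one]

lemma isStarProjection_rangeProj (he : IsIdempotentElem e) : IsStarProjection (rangeProj e) where
  isIdempotentElem := by
    rw [IsIdempotentElem]
    nth_rw 2 [rangeProj]
    rw [← mul_assoc, ← mul_assoc, rangeProj_mul_self hd he, rangeProj]
  isSelfAdjoint := isSelfAdjoint_rangeProj he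

lemma rangeProj_mul_rangeProj_of_mul_eq (he : IsIdempotentElem e) (h : e * f = f) :
    rangeProj e * rangeProj f = rangeProj f := by
  have hf : rangeProj e * f = f := by rw [← h, ← mul_assoc, rangeProj_mul_self hd he]
  calc rangeProj e * rangeProj f
        = rangeProj e * f * star f * Ring.inverse (rangeProjDenom f) := by
          simp only [rangeProj, mul_assoc]
    _ = rangeProj f := by rw [hf, rangeProj]

end

end RangeProj

section StarProjectionChain

variable {R : Type*} [Ring R] [StarRing R] {n : ℕ} {P : Fin (n + 1) → R}

lemma isStarProjection_succ_sub_castSucc (hP : ∀ j, IsStarProjection (P j))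
    (hmono : ∀ j k, j ≤ k → P k * P j = P j) (i : Fin n) :
    IsStarProjection (P i.succ - P i.castSucc) :=
  (hP _).sub_of_mul_eq_right (hP _) (hmono _ _ i.castSucc_le_succ)

lemma succ_sub_castSucc_mul_eq_zero (hP : ∀ j, IsStarProjection (P j))
    (hmono : ∀ j k, j ≤ k → P k * P j = P j) {i i' : Fin n} (h : i ≠ i') :
    (P i.succ - P i.castSucc) * (P i'.succ - P i'.castSucc) = 0 := by
  have hmono' : ∀ j k, j ≤ k → P j * P k = P j := fun j k hjk => by
    simpa [(hP j).isSelfAdjoint.star_eq, (hP k).isSelfAdjoint.star_eq] using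
      congrArg star (hmono j k hjk)
  rcases h.lt_or_gt with h | h
  · have hle : i.succ ≤ i'.castSucc := Fin.succ_le_castSucc_iff.2 h
    rw [sub_mul, mul_sub, mul_sub, hmono' _ _ (hle.trans i'.castSucc_le_succ), hmono' _ _ hle,
      hmono' _ _ (i.castSucc_le_succ.trans (hle.trans i'.castSucc_le_succ)),
      hmono' _ _ (i.castSucc_le_succ.trans hle)]
    abel
  · have hle : i'.succ ≤ i.castSucc := Fin.succ_le_castSucc_iff.2 h
    rw [sub_mul, mul_sub, mul_sub, hmono _ _ (hle.trans i.castSucc_le_succ),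
      hmono _ _ (i'.castSucc_le_succ.trans (hle.trans i.castSucc_le_succ)), hmono _ _ hle,
      hmono _ _ (i'.castSucc_le_succ.trans hle)]
    abel

end StarProjectionChain

lemma Fin.sum_univ_succ_sub_castSucc {M : Type*} [AddCommGroup M] {n : ℕ}
    (f : Fin (n + 1) → M) :
    ∑ i : Fin n, (f i.succ - f i.castSucc) = f (Fin.last n) - f 0 := by
  cases n with
  | zero => simp
  | succ n => rw [← Finset.Iic_top, Fin.sum_Iic_sub]; rfl

section PartialSum

variable {R : Type*} [Ring R] {n : ℕ} (e : Fin n → R)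

def partialSum (j : Fin (n + 1)) : R := ∑ i with i.castSucc < j, e i

@[simp] lemma partialSum_zero : partialSum e 0 = 0 := by simp [partialSum]

@[simp] lemma partialSum_last : partialSum e (Fin.last n) = ∑ i, e i := by
  simp [partialSum, Fin.castSucc_lt_last]

lemma partialSum_succ_eq_sum_Iic (i : Fin n) : partialSum e i.succ = ∑ j ∈ Iic i, e j := by
  simp only [partialSum, Fin.castSucc_lt_succ_iff]
  congr 1; ext; simp

lemma partialSum_succ_sub_castSucc (i : Fin n) :
    partialSum e i.succ - partialSum e i.castSucc = e i := by
  have hcons : ({j | j.castSucc < i.succ} : Finset (Fin n)) =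
      cons i {j | j.castSucc < i.castSucc} (by simp) := by
    ext j; simp [le_iff_lt_or_eq, or_comm]
  rw [partialSum, hcons, sum_cons, partialSum, add_sub_cancel_right]

variable {e}

lemma OrthogonalIdempotents.sum_mul_sum_of_subset {I : Type*} {e : I → R}
    (he : OrthogonalIdempotents e) {s t : Finset I} (hst : s ⊆ t) :
    (∑ i ∈ t, e i) * ∑ i ∈ s, e i = ∑ i ∈ s, e i := by
  classical
  rw [Finset.sum_mul_sum, Finset.sum_comm]
  refine Finset.sum_congr rfl fun j hj => ?_
  simp [he.mul_eq, hst hj]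

lemma isIdempotentElem_partialSum (he : OrthogonalIdempotents e) (j : Fin (n + 1)) :
    IsIdempotentElem (partialSum e j) :=
  he.isIdempotentElem_sum

lemma partialSum_mul_partialSum_of_le (he : OrthogonalIdempotents e) {j k : Fin (n + 1)}
    (hjk : j ≤ k) :
    partialSum e k * partialSum e j = partialSum e j :=
  he.sum_mul_sum_of_subset fun i hi => by
    simp only [Finset.mem_filter, Finset.mem_univ, true_and] at hi ⊢
    exact hi.trans_le hjk

end PartialSum

section GramSchmidt

variable {R : Type*} [Ring R] [StarRing R] {n : ℕ}

noncomputable def gramSchmidtProj (e : Fin n → R) (i : Fin n) : R :=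
  rangeProj (partialSum e i.succ) - rangeProj (partialSum e i.castSucc)

variable {e : Fin n → R}

lemma sum_Iic_gramSchmidtProj (k : Fin n) :
    ∑ i ∈ Iic k, gramSchmidtProj e i = rangeProj (partialSum e k.succ) := by
  have h := Fin.sum_Iic_sub k fun j => rangeProj (partialSum e j)
  rwa [partialSum_zero, rangeProj_zero, sub_zero] at h

lemma sum_gramSchmidtProj (hsum : ∑ i, e i = 1) : ∑ i, gramSchmidtProj e i = 1 := by
  have h := Fin.sum_univ_succ_sub_castSucc fun j => rangeProj (partialSum e j)
  rwa [partialSum_zero, partialSum_last, hsum, rangeProj_zero, rangeProj_one, sub_zero] at h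

variable (he : OrthogonalIdempotents e) (hd : ∀ a : R, IsUnit (rangeProjDenom a))
include he hd

lemma rangeProj_partialSum_mul_of_le {j k : Fin (n + 1)} (hjk : j ≤ k) :
    rangeProj (partialSum e k) * rangeProj (partialSum e j) = rangeProj (partialSum e j) :=
  rangeProj_mul_rangeProj_of_mul_eq (hd _) (isIdempotentElem_partialSum he k)
    (partialSum_mul_partialSum_of_le he hjk)

lemma isStarProjection_gramSchmidtProj (i : Fin n) : IsStarProjection (gramSchmidtProj e i) :=
  isStarProjection_succ_sub_castSucc
    (fun j => isStarProjection_rangeProj (hd _) (isIdempotentElem_partialSum he j))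
    (fun _ _ => rangeProj_partialSum_mul_of_le he hd) i

lemma gramSchmidtProj_mul_eq_zero {i i' : Fin n} (h : i ≠ i') :
    gramSchmidtProj e i * gramSchmidtProj e i' = 0 :=
  succ_sub_castSucc_mul_eq_zero
    (fun j => isStarProjection_rangeProj (hd _) (isIdempotentElem_partialSum he j))
    (fun _ _ => rangeProj_partialSum_mul_of_le he hd) h

end GramSchmidt

namespace Matrix

variable {m : Type*} [Fintype m]

section Field

variable {K : Type*} [Field K] {A B : Matrix m m K}

lemma range_mulVecLin_eq_of_mul_eq (hAB : A * B = B) (hBA : B * A = A) :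
    LinearMap.range A.mulVecLin = LinearMap.range B.mulVecLin := by
  apply le_antisymm
  · rw [← hBA, mulVecLin_mul]
    exact LinearMap.range_comp_le_range _ _
  · rw [← hAB, mulVecLin_mul]
    exact LinearMap.range_comp_le_range _ _

lemma natCast_rank_eq_trace [DecidableEq m] (hA : IsIdempotentElem A) :
    (A.rank : K) = A.trace := by
  have hA' : IsIdempotentElem A.mulVecLin := by
    rw [IsIdempotentElem, Module.End.mul_eq_comp, ← mulVecLin_mul, hA.eq]
  rw [← trace_toLin'_eq, toLin'_apply', (LinearMap.IsIdempotentElem.isProj_range _ hA').trace,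
    rank]

end Field

variable [DecidableEq m] {𝕜 : Type*} [RCLike 𝕜]

open ComplexOrder in
lemma isUnit_rangeProjDenom (A : Matrix m m 𝕜) : IsUnit (rangeProjDenom A) :=
  (PosDef.one.add_posSemidef (posSemidef_self_mul_conjTranspose _)).isUnit

lemma continuous_rangeProj : Continuous (rangeProj : Matrix m m 𝕜 → Matrix m m 𝕜) := by
  have hdenom : Continuous (rangeProjDenom : Matrix m m 𝕜 → Matrix m m 𝕜) := by
    unfold rangeProjDenom; fun_prop
  have hinv : Continuous fun A : Matrix m m 𝕜 => (rangeProjDenom A)⁻¹ :=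
    continuous_iff_continuousAt.2 fun A => (continuousAt_matrix_inv _ <|
      (Ring.inverse_eq_inv' (G₀ := 𝕜)) ▸ continuousAt_inv₀
        ((isUnit_iff_isUnit_det _).1 (isUnit_rangeProjDenom A)).ne_zero).comp
          hdenom.continuousAt
  have hformula : (rangeProj : Matrix m m 𝕜 → Matrix m m 𝕜) =
      fun A => A * star A * (rangeProjDenom A)⁻¹ := by
    funext A; rw [rangeProj, nonsing_inv_eq_ringInverse]
  rw [hformula]
  fun_prop

variable {A : Matrix m m 𝕜} (hA : IsIdempotentElem A)
include hA

lemma range_mulVecLin_rangeProj :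
    LinearMap.range (rangeProj A).mulVecLin = LinearMap.range A.mulVecLin :=
  range_mulVecLin_eq_of_mul_eq (rangeProj_mul_self (isUnit_rangeProjDenom A) hA)
    (mul_rangeProj hA)

lemma trace_rangeProj : (rangeProj A).trace = A.trace := by
  have hP := (isStarProjection_rangeProj (isUnit_rangeProjDenom A) hA).isIdempotentElem
  rw [← natCast_rank_eq_trace hP, ← natCast_rank_eq_trace hA, rank, rank,
    range_mulVecLin_rangeProj hA]

omit hA

section GramSchmidt

variable {n : ℕ} {e : Fin n → Matrix m m 𝕜} (he : OrthogonalIdempotents e)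
include he

lemma rank_gramSchmidtProj (i : Fin n) : (gramSchmidtProj e i).rank = (e i).rank := by
  have hQ := (isStarProjection_gramSchmidtProj he isUnit_rangeProjDenom i).isIdempotentElem
  apply Nat.cast_injective (R := 𝕜)
  rw [natCast_rank_eq_trace hQ, natCast_rank_eq_trace (he.idem i), gramSchmidtProj, trace_sub,
    trace_rangeProj (isIdempotentElem_partialSum he _),
    trace_rangeProj (isIdempotentElem_partialSum he _), ← trace_sub,
    partialSum_succ_sub_castSucc]

lemma range_mulVecLin_sum_Iic_gramSchmidtProj (k : Fin n) :
    LinearMap.range (∑ i ∈ Iic k, gramSchmidtProj e i).mulVecLin =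
      LinearMap.range (∑ i ∈ Iic k, e i).mulVecLin := by
  rw [sum_Iic_gramSchmidtProj, range_mulVecLin_rangeProj (isIdempotentElem_partialSum he _),
    partialSum_succ_eq_sum_Iic]

end GramSchmidt

lemma continuous_gramSchmidtProj {X : Type*} [TopologicalSpace X] {n : ℕ}
    {E : Fin n → X → Matrix m m 𝕜} (hE : ∀ i, Continuous (E i)) (i : Fin n) :
    Continuous fun x => gramSchmidtProj (E · x) i := by
  have hP : ∀ j, Continuous fun x => rangeProj (partialSum (E · x) j) := fun j =>
    continuous_rangeProj.comp (continuous_finsetSum _ fun i _ => hE i)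
  exact (hP _).sub (hP _)

end Matrix

theorem stmt_12_general {X : Type*} [TopologicalSpace X] (n : ℕ)
    (E : Fin n → X → Matrix (Fin n) (Fin n) ℂ) (hE : ∀ i, Continuous (E i))
    (hidem : ∀ x, ∀ i, E i x * E i x = E i x)
    (horth : ∀ x, ∀ i j, i ≠ j → E i x * E j x = 0)
    (hsum : ∀ x, (∑ i, E i x) = 1)
    (hrank : ∀ x, ∀ i, (E i x).rank = 1) :
    ∃ Q : Fin n → X → Matrix (Fin n) (Fin n) ℂ,
      (∀ i, Continuous (Q i)) ∧
      ∀ x,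
        (∀ i, Q i x * Q i x = Q i x ∧ (Q i x)ᴴ = Q i x ∧ (Q i x).rank = 1) ∧
        (∀ i j, i ≠ j → Q i x * Q j x = 0) ∧
        (∑ i, Q i x) = 1 ∧
        ∀ k : Fin n,
          LinearMap.range (∑ i ∈ Finset.Iic k, Q i x).mulVecLin =
            LinearMap.range (∑ i ∈ Finset.Iic k, E i x).mulVecLin := by
  refine ⟨fun i x => gramSchmidtProj (E · x) i, continuous_gramSchmidtProj hE, fun x => ?_⟩
  have he : OrthogonalIdempotents (E · x) := ⟨hidem x, fun i j => horth x i j⟩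
  have hQ := isStarProjection_gramSchmidtProj he isUnit_rangeProjDenom
  exact ⟨fun i => ⟨(hQ i).isIdempotentElem, (hQ i).isSelfAdjoint,
      (rank_gramSchmidtProj he i).trans (hrank x i)⟩,
    fun i j => gramSchmidtProj_mul_eq_zero he isUnit_rangeProjDenom,
    sum_gramSchmidtProj (hsum x), range_mulVecLin_sum_Iic_gramSchmidtProj he⟩

/-- Continuous Gram–Schmidt for splittings of the trivial bundle: given continuous idempotents
`E_1, …, E_n` with pairwise zero products, summing to `I`, and of rank one, there are continuous
rank-one *orthogonal* (self-adjoint) projections `Q_1, …, Q_n`, pairwise orthogonal and summing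
to `I`, such that every partial sum `Q_1 + ⋯ + Q_k` has the same range as `E_1 + ⋯ + E_k`. -/
theorem stmt_12 {X : Type*} [TopologicalSpace X] (n : ℕ) (hn : 1 ≤ n)
    (E : Fin n → X → Matrix (Fin n) (Fin n) ℂ) (hE : ∀ i, Continuous (E i))
    (hidem : ∀ x, ∀ i, E i x * E i x = E i x)
    (horth : ∀ x, ∀ i j, i ≠ j → E i x * E j x = 0)
    (hsum : ∀ x, (∑ i, E i x) = 1)
    (hrank : ∀ x, ∀ i, (E i x).rank = 1) :
    ∃ Q : Fin n → X → Matrix (Fin n) (Fin n) ℂ,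
      (∀ i, Continuous (Q i)) ∧
      ∀ x,
        (∀ i, Q i x * Q i x = Q i x ∧ (Q i x)ᴴ = Q i x ∧ (Q i x).rank = 1) ∧
        (∀ i j, i ≠ j → Q i x * Q j x = 0) ∧
        (∑ i, Q i x) = 1 ∧
        ∀ k : Fin n,
          LinearMap.range (∑ i ∈ Finset.Iic k, Q i x).mulVecLin =
            LinearMap.range (∑ i ∈ Finset.Iic k, E i x).mulVecLin :=
  stmt_12_general n E hE hidem horth hsum hrank
end
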